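/- The dual Fibonacci lattice L⁰ = {((n−mτ′)/√5, (mτ−n)/√5) : m,n ∈ ℤ} satisfies L⁰ + [0, τ/√5] × (−τ/√5, τ/√5) = ℝ²; that is, every point of ℝ² can be written as a lattice point of L⁰ plus a point of the box [0, τ/√5] × (−τ/√5, τ/√5), where τ = (1+√5)/2. -/

import Mathlib

/-!
After scaling by `√5` the lattice is `{(n - m τ', m τ - n)}`, whose coordinate sum
`m (τ - τ') = m √5` depends on `m` alone. Choose `m` so that the coordinate sum of the
difference lies in `[1 - τ, 1 - τ + √5) = [1 - τ, τ)`, then `n` so that its first coordinate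
lies in `[0, 1)`; its second coordinate then lies in `[1 - τ, τ) - [0, 1) ⊆ (-τ, τ)`.
-/

noncomputable def tau : ℝ := (1 + Real.sqrt 5) / 2
noncomputable def tau' : ℝ := (1 - Real.sqrt 5) / 2

open Set

theorem exists_int_lattice_sub_mem_Ico_Ioo {a b : ℝ} (hba : b < a) (c x y : ℝ) :
    ∃ m n : ℤ, x + m * b - n ∈ Ico 0 1 ∧ y - m * a + n ∈ Ioo (c - 1) (c + (a - b)) := by
  obtain ⟨m, ⟨hm_lo, hm_hi⟩, -⟩ := existsUnique_sub_zsmul_mem_Ico (sub_pos.2 hba) (x + y) c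
  refine ⟨m, ⌊x + m * b⌋, ⟨?_, ?_⟩, ?_, ?_⟩
  all_goals
    have := Int.floor_le (x + m * b)
    have := Int.lt_floor_add_one (x + m * b)
    simp only [zsmul_eq_mul] at hm_lo hm_hi
    linarith

theorem tau_sub_tau' : tau - tau' = Real.sqrt 5 := by
  rw [tau, tau']; ring

theorem tau'_lt_tau : tau' < tau := by
  rw [← sub_pos, tau_sub_tau']; positivity

theorem one_le_tau : 1 ≤ tau := by
  have : 1 ≤ Real.sqrt 5 := Real.one_le_sqrt.2 (by norm_num)
  rw [tau]; linarith

/-- The dual Fibonacci lattice satisfies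
`L⁰ + [0, τ/√5] × (−τ/√5, τ/√5) = ℝ²`. -/
theorem dual_fibonacci_lattice_covers (v : ℝ × ℝ) :
    ∃ m n : ℤ,
      v.1 - ((n : ℝ) - m * tau') / Real.sqrt 5 ∈ Set.Icc 0 (tau / Real.sqrt 5) ∧
      v.2 - ((m : ℝ) * tau - n) / Real.sqrt 5 ∈
        Set.Ioo (-(tau / Real.sqrt 5)) (tau / Real.sqrt 5) := by
  set s := Real.sqrt 5
  have hs : 0 < s := by positivity
  obtain ⟨m, n, h₁, h₂⟩ :=
    exists_int_lattice_sub_mem_Ico_Ioo tau'_lt_tau (1 - tau) (v.1 * s) (v.2 * s)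
  have h_lo : 1 - tau - 1 = -tau := by ring
  have h_hi : 1 - tau + (tau - tau') = tau := by rw [tau_sub_tau', tau]; ring
  rw [h_lo, h_hi] at h₂
  refine ⟨m, n, ?_, ?_⟩
  · have h : (v.1 - (n - m * tau') / s) * s ∈ Icc 0 tau := by
      convert Icc_subset_Icc_right one_le_tau (Ico_subset_Icc_self h₁) using 1
      field_simp; ring
    rwa [← zero_div s, ← preimage_mul_const_Icc₀ _ _ hs]
  · have h : (v.2 - (m * tau - n) / s) * s ∈ Ioo (-tau) tau := by
      convert h₂ using 1; field_simp; ring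
    rwa [← neg_div, ← preimage_mul_const_Ioo₀ _ _ hs]
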